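/- arXiv:1602.07929 — 2 statements merged into one kernel-verified Lean document; each statement's English description precedes it below -/
import Mathlib

section
/- Let n ≥ 1 with n ∉ N_B and n+1 ∈ N_B, and let α_1,…,α_n ∈ {0,1,…,s−1} with α_n ≠ 0. Then the quasi-nega-s values of the following two digit sequences are equal: the sequence with digits α_1,…,α_{n−1}, α_n at position n, s−1 at position n+1, and β_k at every position k ≥ n+2; and the sequence with digits α_1,…,α_{n−1}, α_n−1 at position n, 0 at position n+1, and γ_k at every position k ≥ n+2. -/
open scoped Classical BigOperators

/-- Sign of the `n`-th term: `-1` if `n ∈ N_B`, `+1` otherwise. -/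
noncomputable def eps (B : Set ℕ+) (n : ℕ+) : ℝ := if n ∈ B then -1 else 1

/-- The quasi-nega-s value of a digit sequence `α`:
`S(α) = Σ_{n≥1} ε_n α_n / s^n`. -/
noncomputable def qnsVal (s : ℕ) (B : Set ℕ+) (α : ℕ+ → ℕ) : ℝ :=
  ∑' n : ℕ+, eps B n * (α n : ℝ) / (s : ℝ) ^ (n : ℕ)

/-!
Termwise, the first sequence minus the second contributes `1 / s^n` at position `n` and
`-(s - 1) / s^k` at every position `k > n`: beyond `n` the digits `β_k` and `γ_k` are swapped,
and the sign `ε_k` turns either swap into the same loss. The geometric series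
`∑_{k > n} (s - 1) / s^k = 1 / s^n` makes the total difference vanish.
-/

lemma abs_eps (B : Set ℕ+) (k : ℕ+) : |eps B k| = 1 := by
  unfold eps; split_ifs <;> simp

lemma summable_qnsVal {s : ℕ} (hs : 1 < s) (B : Set ℕ+) {a : ℕ+ → ℕ} {M : ℕ}
    (ha : ∀ k, a k ≤ M) :
    Summable fun k : ℕ+ => eps B k * (a k : ℝ) / (s : ℝ) ^ (k : ℕ) := by
  have hs' : (1 : ℝ) < s := by exact_mod_cast hs
  have hgeo : Summable fun k : ℕ => (M : ℝ) * (s : ℝ)⁻¹ ^ k :=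
    (summable_geometric_of_lt_one (by positivity) (inv_lt_one_of_one_lt₀ hs')).mul_left _
  refine Summable.of_norm_bounded (summable_pnat_iff_summable_nat.mpr hgeo) fun k => ?_
  rw [Real.norm_eq_abs, abs_div, abs_mul, abs_eps, one_mul, Nat.abs_cast, abs_pow,
    Nat.abs_cast, inv_pow, ← div_eq_mul_inv]
  gcongr
  exact_mod_cast ha k

lemma qnsVal_sub_qnsVal {s : ℕ} (hs : 1 < s) (B : Set ℕ+) {a c : ℕ+ → ℕ} {M : ℕ}
    (ha : ∀ k, a k ≤ M) (hc : ∀ k, c k ≤ M) :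
    qnsVal s B a - qnsVal s B c =
      ∑' k : ℕ+, eps B k * ((a k : ℝ) - c k) / (s : ℝ) ^ (k : ℕ) := by
  rw [qnsVal, qnsVal, ← (summable_qnsVal hs B ha).tsum_sub (summable_qnsVal hs B hc)]
  congr 1 with k
  ring

lemma hasSum_sub_one_div_pow_add_succ {x : ℝ} (hx : 1 < x) (n : ℕ) :
    HasSum (fun i : ℕ => (x - 1) / x ^ (i + (n + 1))) (1 / x ^ n) := by
  have hx0 : x ≠ 0 := by positivity
  have hterm : (fun i : ℕ => (x - 1) / x ^ (i + (n + 1))) =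
      fun i => (x - 1) / x ^ (n + 1) * x⁻¹ ^ i := by
    ext i
    rw [pow_add, inv_pow]
    field_simp
  have hsum : 1 / x ^ n = (x - 1) / x ^ (n + 1) * (1 - x⁻¹)⁻¹ := by
    have : x - 1 ≠ 0 := by linarith
    field_simp
    ring
  rw [hterm, hsum]
  exact (hasSum_geometric_of_lt_one (by positivity) (inv_lt_one_of_one_lt₀ hx)).mul_left _

lemma hasSum_pnat_sub_one_div_pow_of_lt {x : ℝ} (hx : 1 < x) (n : ℕ+) :
    HasSum (fun k : ℕ+ => if n < k then (x - 1) / x ^ (k : ℕ) else 0) (1 / x ^ (n : ℕ)) := by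
  let f : ℕ → ℝ := fun m => if (n : ℕ) < m then (x - 1) / x ^ m else 0
  have hhead : ∑ m ∈ Finset.range ((n : ℕ) + 1), f m = 0 :=
    Finset.sum_eq_zero fun m hm => if_neg (by simp at hm; omega)
  have htail : (fun i => f (i + ((n : ℕ) + 1))) = fun i => (x - 1) / x ^ (i + ((n : ℕ) + 1)) :=
    funext fun i => if_pos (by omega)
  have hf : HasSum f (1 / x ^ (n : ℕ)) := by
    rw [← hasSum_nat_add_iff' ((n : ℕ) + 1), hhead, sub_zero, htail]
    exact hasSum_sub_one_div_pow_add_succ hx n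
  have hf0 : f 0 = 0 := if_neg (by omega)
  have := hasSum_pnat_iff.mpr (by rwa [hf0, add_zero] : HasSum f (1 / x ^ (n : ℕ) + f 0))
  simpa only [f, PNat.coe_lt_coe] using this

/-- Case `n ∉ N_B`, `n+1 ∈ N_B`: the two indicated digit sequences have equal
quasi-nega-s values. -/
theorem quasiNegaS_two_reps_notMem_mem (s : ℕ) (hs : 2 ≤ s) (B : Set ℕ+)
    (n : ℕ+) (hn : n ∉ B) (hn1 : n + 1 ∈ B)
    (α : ℕ+ → ℕ) (hα : ∀ k, α k < s) (hαn : α n ≠ 0) :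
    qnsVal s B (fun k =>
        if k < n then α k else if k = n then α n
        else if k = n + 1 then s - 1
        else if k ∈ B then s - 1 else 0)
      = qnsVal s B (fun k =>
        if k < n then α k else if k = n then α n - 1
        else if k = n + 1 then 0
        else if k ∉ B then s - 1 else 0) := by
  rw [← sub_eq_zero, qnsVal_sub_qnsVal hs B (M := s) (fun k => ?_) (fun k => ?_)]
  rotate_left
  · have := hα k; have := hα n; split_ifs <;> omega
  · have := hα k; have := hα n; split_ifs <;> omega
  have hs1 : (1 : ℝ) < s := by exact_mod_cast hs
  have hcarry := (hasSum_ite_eq n (1 / (s : ℝ) ^ (n : ℕ))).sub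
    (hasSum_pnat_sub_one_div_pow_of_lt hs1 n)
  rw [sub_self] at hcarry
  refine (tsum_congr fun k => ?_).trans hcarry.tsum_eq
  rcases lt_trichotomy k n with hk | rfl | hk
  · simp [hk, hk.ne, hk.not_gt]
  · simp [eps, hn, Nat.cast_sub (Nat.one_le_iff_ne_zero.mpr hαn)]
  · simp only [hk.not_gt, hk.ne', hk, if_false, if_true]
    split_ifs <;> simp_all [eps, Nat.cast_sub (by omega : 1 ≤ s)] <;> ring
end

section
/- Let n ≥ 1 with n ∈ N_B and n+1 ∈ N_B, and let ε_1,…,ε_n with ε_i ∈ {0,1,…,d_i−1} and ε_n ≠ 0. Then the quasi-nega-D values of the following two D-digit sequences are equal: the sequence with digits ε_1,…,ε_{n−1}, d_n−1−ε_n at position n, d_{n+1}−1 at position n+1, and β_k at every position k ≥ n+2; and the sequence with digits ε_1,…,ε_{n−1}, d_n−ε_n at position n, 0 at position n+1, and γ_k at every position k ≥ n+2. -/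
open scoped Classical BigOperators

/-- Sign of the `n`-th term: `-1` if `n ∈ N_B`, `+1` otherwise. -/
noncomputable def sigma (B : Set ℕ+) (n : ℕ+) : ℝ := if n ∈ B then -1 else 1

/-- The partial product `d_1 d_2 ⋯ d_n`. -/
noncomputable def dprod (d : ℕ+ → ℕ) (n : ℕ+) : ℝ := ∏ i ∈ Finset.Icc 1 n, (d i : ℝ)

/-- The quasi-nega-D value of a D-digit sequence `ε`:
`T(ε) = Σ_{n≥1} σ_n ε_n / (d_1 d_2 ⋯ d_n)`. -/
noncomputable def qndVal (d : ℕ+ → ℕ) (B : Set ℕ+) (ε : ℕ+ → ℕ) : ℝ :=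
  ∑' n : ℕ+, sigma B n * (ε n : ℝ) / dprod d n

/-! The two sequences agree before place `n`. Weighted by the signs `σ_k`, the first exceeds
the second by `1` at place `n` and falls short of it by `d_k - 1` at every place `k > n`: at `n + 1`
and on `N_B` the sign is `-1` and the first sequence carries the digit `d_k - 1`, off `N_B` the
sign is `+1` and the second one does. So the difference of the two values is
`1 / (d_1 ⋯ d_n) - Σ_{k > n} (d_k - 1) / (d_1 ⋯ d_k)`, which vanishes because
`(d_k - 1) / (d_1 ⋯ d_k) = 1 / (d_1 ⋯ d_{k-1}) - 1 / (d_1 ⋯ d_k)` telescopes. -/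

open Finset Filter Topology

lemma hasSum_sub_succ_of_antitone {u : ℕ → ℝ} (hu : Antitone u)
    (hlim : Tendsto u atTop (𝓝 0)) : HasSum (fun m => u m - u (m + 1)) (u 0) := by
  rw [hasSum_iff_tendsto_nat_of_nonneg (fun m => sub_nonneg.2 (hu m.le_succ))]
  simp_rw [sum_range_sub']
  simpa using hlim.const_sub (u 0)

lemma hasSum_sub_one_div_prod_range {c : ℕ → ℝ} (hc : ∀ i, 2 ≤ c i) (n : ℕ) :
    HasSum (fun m => (c (n + m) - 1) / ∏ i ∈ range (n + m + 1), c i)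
      (∏ i ∈ range n, c i)⁻¹ := by
  set π : ℕ → ℝ := fun m => ∏ i ∈ range m, c i
  have hc_pos (i : ℕ) : 0 < c i := two_pos.trans_le (hc i)
  have hπ_pos (m : ℕ) : 0 < π m := prod_pos fun i _ => hc_pos i
  have hπ_succ (m : ℕ) : π (m + 1) = π m * c m := prod_range_succ _ _
  have hπ_anti : Antitone fun m => (π m)⁻¹ := antitone_nat_of_succ_le fun m => by
    rw [hπ_succ]
    exact inv_anti₀ (hπ_pos m) (le_mul_of_one_le_right (hπ_pos m).le (one_le_two.trans (hc m)))
  have hπ_lim : Tendsto π atTop atTop := by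
    refine tendsto_atTop_mono (fun m => ?_) (tendsto_pow_atTop_atTop_of_one_lt one_lt_two)
    calc (2 : ℝ) ^ m = ∏ i ∈ range m, (2 : ℝ) := by simp
      _ ≤ π m := prod_le_prod (fun _ _ => zero_le_two) fun i _ => hc i
  refine (hasSum_sub_succ_of_antitone (u := fun m => (π (n + m))⁻¹)
    (hπ_anti.comp_monotone fun a b h => Nat.add_le_add_left h n)
    (tendsto_inv_atTop_zero.comp (hπ_lim.comp ?_))).congr_fun fun m => ?_
  · exact (tendsto_add_atTop_nat n).congr fun m => add_comm m n
  · change _ / π (n + m + 1) = (π (n + m))⁻¹ - (π (n + m + 1))⁻¹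
    rw [hπ_succ]
    field_simp [(hπ_pos (n + m)).ne', (hc_pos (n + m)).ne']

lemma abs_sigma (B : Set ℕ+) (k : ℕ+) : |sigma B k| = 1 := by
  unfold sigma
  split_ifs <;> simp

noncomputable def betaTailDigits (d : ℕ+ → ℕ) (B : Set ℕ+) (n : ℕ+) (ε : ℕ+ → ℕ) (k : ℕ+) : ℕ :=
  if k < n then ε k else if k = n then d n - 1 - ε n
  else if k = n + 1 then d (n + 1) - 1
  else if k ∈ B then d k - 1 else 0

noncomputable def gammaTailDigits (d : ℕ+ → ℕ) (B : Set ℕ+) (n : ℕ+) (ε : ℕ+ → ℕ) (k : ℕ+) : ℕ :=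
  if k < n then ε k else if k = n then d n - ε n
  else if k = n + 1 then 0
  else if k ∉ B then d k - 1 else 0

section

variable {d : ℕ+ → ℕ}

lemma dprod_eq_prod_range (k : ℕ+) : dprod d k = ∏ i ∈ range k, (d i.succPNat : ℝ) :=
  prod_nbij' PNat.natPred Nat.succPNat
    (fun a ha => by
      simpa [PNat.natPred] using
        Nat.sub_one_lt_of_le a.pos ((PNat.coe_le_coe a k).2 (mem_Icc.1 ha).2))
    (fun a ha => by simpa [← PNat.coe_le_coe] using ha) (by simp) (by simp) (by simp)

lemma dprod_pos (hd : ∀ k, 0 < d k) (k : ℕ+) : 0 < dprod d k :=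
  prod_pos fun i _ => Nat.cast_pos.2 (hd i)

lemma hasSum_tail_sub_one_div_dprod (hd : ∀ k, 2 ≤ d k) (n : ℕ+) :
    HasSum (fun k : ℕ+ => if n < k then ((d k : ℝ) - 1) / dprod d k else 0) (dprod d n)⁻¹ := by
  rw [← Equiv.pnatEquivNat.symm.hasSum_iff, ← hasSum_nat_add_iff' n, sum_eq_zero, sub_zero,
    dprod_eq_prod_range]
  · refine (hasSum_sub_one_div_prod_range (fun i => by exact_mod_cast hd i.succPNat) n).congr_fun
      fun m => ?_
    have hlt : n < (m + n).succPNat := by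
      rw [← PNat.coe_lt_coe, Nat.succPNat_coe]
      omega
    rw [Function.comp_apply, Equiv.pnatEquivNat_symm_apply, if_pos hlt, dprod_eq_prod_range,
      Nat.succPNat_coe, add_comm m]
  · intro i hi
    rw [Function.comp_apply, Equiv.pnatEquivNat_symm_apply, if_neg]
    rw [← PNat.coe_lt_coe, Nat.succPNat_coe, not_lt]
    exact mem_range.1 hi

lemma hasSum_single_sub_tail_div_dprod (hd : ∀ k, 2 ≤ d k) (n : ℕ+) :
    HasSum (fun k => ((if k = n then 1 else 0) - if n < k then (d k : ℝ) - 1 else 0) / dprod d k)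
      0 := by
  have h := (hasSum_ite_eq n (dprod d n)⁻¹).sub (hasSum_tail_sub_one_div_dprod hd n)
  rw [sub_self] at h
  refine h.congr_fun fun k => ?_
  rw [sub_div]
  split_ifs <;> simp_all

lemma summable_sub_one_div_dprod (hd : ∀ k, 2 ≤ d k) :
    Summable fun k : ℕ+ => ((d k : ℝ) - 1) / dprod d k := by
  refine (hasSum_tail_sub_one_div_dprod hd 1).summable.congr_cofinite ?_
  filter_upwards [eventually_cofinite_ne 1] with k hk
  rw [if_pos (one_le.lt_of_ne hk.symm)]

lemma summable_sigma_mul_div_dprod (hd : ∀ k, 2 ≤ d k) (B : Set ℕ+) {e : ℕ+ → ℕ}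
    (he : ∀ k, e k < d k) : Summable fun k => sigma B k * (e k : ℝ) / dprod d k := by
  refine (summable_sub_one_div_dprod hd).of_norm_bounded fun k => ?_
  have hP := dprod_pos (fun k => two_pos.trans_le (hd k)) k
  rw [Real.norm_eq_abs, abs_div, abs_mul, abs_sigma, one_mul, Nat.abs_cast, abs_of_pos hP]
  gcongr
  exact le_sub_iff_add_le.2 (by exact_mod_cast he k)

variable {B : Set ℕ+} {n : ℕ+} {ε : ℕ+ → ℕ}

lemma gammaTailDigits_lt (hd : ∀ k, 0 < d k) (hε : ∀ k, ε k < d k) (hεn : ε n ≠ 0) (k : ℕ+) :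
    gammaTailDigits d B n ε k < d k := by
  have := hd k
  unfold gammaTailDigits
  split_ifs with hlt heq
  · exact hε k
  · subst heq
    omega
  all_goals omega

lemma sigma_mul_betaTailDigits (hd : ∀ k, 0 < d k) (hn : n ∈ B) (hn1 : n + 1 ∈ B)
    (hεn : ε n < d n) (k : ℕ+) :
    sigma B k * betaTailDigits d B n ε k = sigma B k * gammaTailDigits d B n ε k
      + ((if k = n then 1 else 0) - if n < k then (d k : ℝ) - 1 else 0) := by
  have hdk : ((d k - 1 : ℕ) : ℝ) = d k - 1 := Nat.cast_pred (hd k)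
  rcases lt_trichotomy k n with hlt | rfl | hgt
  · simp [betaTailDigits, gammaTailDigits, hlt, hlt.ne, hlt.asymm]
  · simp [betaTailDigits, gammaTailDigits, sigma, hn, Nat.cast_sub hεn.le,
      Nat.cast_sub (Nat.le_sub_one_of_lt hεn), hdk]
    ring
  · have hk : ¬ k < n ∧ k ≠ n := ⟨hgt.asymm, hgt.ne'⟩
    obtain rfl | hk1 := eq_or_ne k (n + 1)
    · simp [betaTailDigits, gammaTailDigits, sigma, hk, hn1, hgt, hdk]
    by_cases hkB : k ∈ B <;> simp [betaTailDigits, gammaTailDigits, sigma, hk, hk1, hkB, hgt, hdk]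

end

/-- Case `n ∈ N_B`, `n+1 ∈ N_B`: the two indicated D-digit sequences have equal
quasi-nega-D values.  (Tails: `β_k = d_k-1` on `N_B`, `0` off; `γ_k = d_k-1` off `N_B`, `0` on.) -/
theorem quasiNegaD_two_reps_mem_mem (d : ℕ+ → ℕ) (hd : ∀ k, 2 ≤ d k) (B : Set ℕ+)
    (n : ℕ+) (hn : n ∈ B) (hn1 : n + 1 ∈ B)
    (ε : ℕ+ → ℕ) (hε : ∀ k, ε k < d k) (hεn : ε n ≠ 0) :
    qndVal d B (fun k =>
        if k < n then ε k else if k = n then d n - 1 - ε n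
        else if k = n + 1 then d (n + 1) - 1
        else if k ∈ B then d k - 1 else 0)
      = qndVal d B (fun k =>
        if k < n then ε k else if k = n then d n - ε n
        else if k = n + 1 then 0
        else if k ∉ B then d k - 1 else 0) := by
  have hd₀ (k : ℕ+) : 0 < d k := two_pos.trans_le (hd k)
  have hcarry := hasSum_single_sub_tail_div_dprod hd n
  have hγ := summable_sigma_mul_div_dprod hd B (gammaTailDigits_lt (B := B) hd₀ hε hεn)
  change qndVal d B (betaTailDigits d B n ε) = qndVal d B (gammaTailDigits d B n ε)
  unfold qndVal
  simp_rw [sigma_mul_betaTailDigits hd₀ hn hn1 (hε n), add_div]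
  rw [hγ.tsum_add hcarry.summable, hcarry.tsum_eq, add_zero]
end
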